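/- arXiv:1403.6590 — 2 statements merged into one kernel-verified Lean document; each statement's English description precedes it below -/
import Mathlib

section
/- For a quantum state ρ and a substate σ (positive semidefinite with Tr σ ≤ 1) on a finite-dimensional Hilbert space with supp(ρ) ⊆ supp(σ), the relative entropy satisfies S(ρ‖σ) ≥ −2 log Tr(√ρ √σ). -/
open Matrix
open ComplexOrder
open scoped Classical

/-- positive semidefinite square root (junk value `0` off the PSD matrices) -/
noncomputable def msqrt {n : Type*} [Fintype n] [DecidableEq n] (A : Matrix n n ℂ) :
    Matrix n n ℂ :=
  if h : A.PosSemidef then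
    (h.1.eigenvectorUnitary : Matrix n n ℂ) * diagonal ((↑) ∘ Real.sqrt ∘ h.1.eigenvalues) *
      (star h.1.eigenvectorUnitary : Matrix n n ℂ) else 0

/-- matrix logarithm via the Hermitian functional calculus (junk value `0` otherwise) -/
noncomputable def mlog {n : Type*} [Fintype n] [DecidableEq n] (A : Matrix n n ℂ) :
    Matrix n n ℂ :=
  if h : A.IsHermitian then h.cfc Real.log else 0

/-- matrix logarithm taken on the support (eigenvalue `0` is sent to `0`) -/
noncomputable def mlog0 {n : Type*} [Fintype n] [DecidableEq n] (A : Matrix n n ℂ) :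
    Matrix n n ℂ :=
  if h : A.IsHermitian then h.cfc (fun x => if x = 0 then 0 else Real.log x) else 0

/-- matrix exponential -/
noncomputable def mexp {n : Type*} [Fintype n] [DecidableEq n] (A : Matrix n n ℂ) :
    Matrix n n ℂ :=
  NormedSpace.exp A

/-- Frobenius (Hilbert–Schmidt) norm `‖X‖₂ = (Tr (Xᴴ X))^(1/2)` -/
noncomputable def frob {n : Type*} [Fintype n] [DecidableEq n] (X : Matrix n n ℂ) : ℝ :=
  Real.sqrt (Matrix.trace (Xᴴ * X)).re

/-- trace norm `‖X‖₁ = Tr √(Xᴴ X)` -/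
noncomputable def trNorm {n : Type*} [Fintype n] [DecidableEq n] (X : Matrix n n ℂ) : ℝ :=
  (Matrix.trace (msqrt (Xᴴ * X))).re

/-- relative entropy `S(ρ‖σ) = Tr (ρ (log ρ − log σ))` -/
noncomputable def relEnt {n : Type*} [Fintype n] [DecidableEq n]
    (rho sigma : Matrix n n ℂ) : ℝ :=
  (Matrix.trace (rho * (mlog rho - mlog sigma))).re

/-- relative entropy with logarithms taken on the support -/
noncomputable def relEnt0 {n : Type*} [Fintype n] [DecidableEq n]
    (rho sigma : Matrix n n ℂ) : ℝ :=
  (Matrix.trace (rho * (mlog0 rho - mlog0 sigma))).re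

/-- von Neumann entropy `S(τ) = −Tr (τ log τ)` -/
noncomputable def vN {n : Type*} [Fintype n] [DecidableEq n] (rho : Matrix n n ℂ) : ℝ :=
  -(Matrix.trace (rho * mlog rho)).re

section Tripartite

variable {α β γ : Type*} [Fintype α] [DecidableEq α] [Fintype β] [DecidableEq β]
  [Fintype γ] [DecidableEq γ]

/-- partial trace over the `B` system: `ρ_AC` -/
noncomputable def ptrB (M : Matrix (α × β × γ) (α × β × γ) ℂ) : Matrix (α × γ) (α × γ) ℂ :=
  fun p q => ∑ b : β, M (p.1, b, p.2) (q.1, b, q.2)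

/-- partial trace over the `A` system: `ρ_BC` -/
noncomputable def ptrA (M : Matrix (α × β × γ) (α × β × γ) ℂ) : Matrix (β × γ) (β × γ) ℂ :=
  fun p q => ∑ a : α, M (a, p.1, p.2) (a, q.1, q.2)

/-- partial trace over the `A` and `B` systems: `ρ_C` -/
noncomputable def ptrAB (M : Matrix (α × β × γ) (α × β × γ) ℂ) : Matrix γ γ ℂ :=
  fun c c' => ∑ a : α, ∑ b : β, M (a, b, c) (a, b, c')

/-- embedding `X_AC ↦ X_AC ⊗ I_B` -/
def embAC (X : Matrix (α × γ) (α × γ) ℂ) : Matrix (α × β × γ) (α × β × γ) ℂ :=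
  fun p q => if p.2.1 = q.2.1 then X (p.1, p.2.2) (q.1, q.2.2) else 0

/-- embedding `X_BC ↦ I_A ⊗ X_BC` -/
def embBC (X : Matrix (β × γ) (β × γ) ℂ) : Matrix (α × β × γ) (α × β × γ) ℂ :=
  fun p q => if p.1 = q.1 then X p.2 q.2 else 0

/-- embedding `X_C ↦ I_A ⊗ I_B ⊗ X_C` -/
def embC (X : Matrix γ γ ℂ) : Matrix (α × β × γ) (α × β × γ) ℂ :=
  fun p q => if p.1 = q.1 ∧ p.2.1 = q.2.1 then X p.2.2 q.2.2 else 0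

/-- conditional mutual information `I(A:B|C)_ρ = S(ρ_AC)+S(ρ_BC)−S(ρ_ABC)−S(ρ_C)` -/
noncomputable def cmi (rho : Matrix (α × β × γ) (α × β × γ) ℂ) : ℝ :=
  vN (ptrB rho) + vN (ptrA rho) - vN rho - vN (ptrAB rho)

/-- the operator `exp(log σ_AC + log σ_BC − log σ_C)` -/
noncomputable def sigOp (sigma : Matrix (α × β × γ) (α × β × γ) ℂ) :
    Matrix (α × β × γ) (α × β × γ) ℂ :=
  mexp (embAC (mlog (ptrB sigma)) + embBC (mlog (ptrA sigma)) - embC (mlog (ptrAB sigma)))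

/-- the operator `exp(log ρ_AC + log ρ_BC)` -/
noncomputable def sigOp2 (sigma : Matrix (α × β × γ) (α × β × γ) ℂ) :
    Matrix (α × β × γ) (α × β × γ) ℂ :=
  mexp (embAC (mlog (ptrB sigma)) + embBC (mlog (ptrA sigma)))

end Tripartite

/-! Diagonalize `ρ = ∑ pᵢ |aᵢ⟩⟨aᵢ|` and `σ = ∑ qⱼ |bⱼ⟩⟨bⱼ|` and put `cᵢⱼ = |⟨aᵢ|bⱼ⟩|²`, a doubly
stochastic matrix. Then `S(ρ‖σ) = ∑ pᵢ cᵢⱼ (log pᵢ - log qⱼ)` and `Tr √ρ √σ = ∑ cᵢⱼ √pᵢ √qⱼ`. The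
weights `pᵢ cᵢⱼ` form a probability distribution, on whose support `qⱼ > 0` by the support
hypothesis, so Jensen's inequality for the concave `log` at the points `√(qⱼ / pᵢ)` gives
`-S(ρ‖σ) / 2 ≤ log Tr √ρ √σ`. -/

namespace Real

theorem sum_mul_log_le_log_sum_mul {ι : Type*} (s : Finset ι) {w x : ι → ℝ}
    (hw : ∀ i ∈ s, 0 ≤ w i) (hw1 : ∑ i ∈ s, w i = 1) (hx : ∀ i ∈ s, w i ≠ 0 → 0 < x i) :
    ∑ i ∈ s, w i * log (x i) ≤ log (∑ i ∈ s, w i * x i) := by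
  classical
  set t := s.filter (w · ≠ 0)
  have hsum (f : ι → ℝ) : ∑ i ∈ s, w i * f i = ∑ i ∈ t, w i * f i :=
    (Finset.sum_filter_of_ne fun i _ h => left_ne_zero_of_mul h).symm
  have hpos : ∀ i ∈ t, x i ∈ Set.Ioi 0 := fun i hi =>
    (Finset.mem_filter.mp hi).elim fun his hwi => hx i his hwi
  rw [hsum, hsum]
  exact strictConcaveOn_log_Ioi.concaveOn.le_map_sum
    (fun i hi => hw i (Finset.filter_subset _ _ hi)) (by rw [Finset.sum_filter_ne_zero, hw1]) hpos

theorem neg_two_log_sum_sqrt_mul_sqrt_le {ι κ : Type*} [Fintype ι] [Fintype κ]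
    {p : ι → ℝ} {q : κ → ℝ} {c : ι → κ → ℝ} (hp : ∀ i, 0 ≤ p i) (hq : ∀ j, 0 ≤ q j)
    (hc : ∀ i j, 0 ≤ c i j) (hp1 : ∑ i, p i = 1) (hc1 : ∀ i, ∑ j, c i j = 1)
    (hsupp : ∀ i j, q j = 0 → p i * c i j = 0) :
    -2 * log (∑ i, ∑ j, √(p i) * √(q j) * c i j) ≤
      ∑ i, p i * log (p i) - ∑ i, ∑ j, p i * log (q j) * c i j := by
  set w : ι × κ → ℝ := fun k => p k.1 * c k.1 k.2
  set x : ι × κ → ℝ := fun k => √(q k.2) / √(p k.1)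
  have hw1 : ∑ k, w k = 1 := by
    simp only [w, Fintype.sum_prod_type, ← Finset.mul_sum, hc1, mul_one, hp1]
  have hpq : ∀ k, w k ≠ 0 → 0 < p k.1 ∧ 0 < q k.2 := fun ⟨i, j⟩ hk =>
    ⟨(hp i).lt_of_ne' (left_ne_zero_of_mul hk), (hq j).lt_of_ne' (mt (hsupp i j) hk)⟩
  have hjensen := sum_mul_log_le_log_sum_mul Finset.univ (fun k _ => mul_nonneg (hp _) (hc _ _))
    hw1 fun k _ hk => div_pos (sqrt_pos.2 (hpq k hk).2) (sqrt_pos.2 (hpq k hk).1)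
  have hmean : ∑ k, w k * x k = ∑ i, ∑ j, √(p i) * √(q j) * c i j := by
    rw [Fintype.sum_prod_type]
    refine Finset.sum_congr rfl fun i _ => Finset.sum_congr rfl fun j _ => ?_
    rcases (hp i).eq_or_lt with h | h
    · simp [w, ← h]
    · simp only [w, x]
      field_simp
      rw [sq_sqrt (hp i)]
      ring
  have hlog : ∑ k, w k * log (x k) =
      (∑ i, ∑ j, p i * log (q j) * c i j - ∑ i, p i * log (p i)) / 2 := by
    have hterm : ∀ k, w k * log (x k) = (p k.1 * log (q k.2) * c k.1 k.2 -
        p k.1 * log (p k.1) * c k.1 k.2) / 2 := by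
      intro k
      by_cases hk : w k = 0
      · have : p k.1 * c k.1 k.2 = 0 := hk
        simp only [hk, zero_mul]
        linear_combination (log (p k.1) - log (q k.2)) / 2 * this
      · obtain ⟨hpk, hqk⟩ := hpq k hk
        simp only [w, x]
        rw [log_div (sqrt_pos.2 hqk).ne' (sqrt_pos.2 hpk).ne', log_sqrt hqk.le, log_sqrt hpk.le]
        ring
    simp only [hterm, ← Finset.sum_div, Finset.sum_sub_distrib, Fintype.sum_prod_type]
    congr 2
    refine Finset.sum_congr rfl fun i _ => ?_
    rw [← Finset.mul_sum, hc1, mul_one]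
  rw [← hmean]
  linarith

end Real

theorem Matrix.trace_diagonal_mul_mul_diagonal_mul_star {n R : Type*} [Fintype n] [DecidableEq n]
    [CommSemiring R] [StarRing R] (d e : n → R) (W : Matrix n n R) :
    (diagonal d * W * diagonal e * star W).trace =
      ∑ i, ∑ j, d i * e j * (W i j * star (W i j)) := by
  refine Fintype.sum_congr _ _ fun i => ?_
  rw [diag_apply, mul_assoc (diagonal d * W), mul_assoc, diagonal_mul, mul_apply, Finset.mul_sum]
  refine Fintype.sum_congr _ _ fun j => ?_
  rw [diagonal_mul, star_apply]
  ring

namespace Matrix.IsHermitian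

open scoped InnerProductSpace

variable {n : Type*} [Fintype n] [DecidableEq n] {A B : Matrix n n ℂ}

protected theorem cfc_id (hA : A.IsHermitian) : hA.cfc id = A :=
  hA.spectral_theorem.symm

noncomputable def eigenOverlap (hA : A.IsHermitian) (hB : B.IsHermitian) (i j : n) : ℝ :=
  ‖⟪hA.eigenvectorBasis i, hB.eigenvectorBasis j⟫_ℂ‖ ^ 2

theorem sum_eigenOverlap (hA : A.IsHermitian) (hB : B.IsHermitian) (i : n) :
    ∑ j, eigenOverlap hA hB i j = 1 := by
  simp [eigenOverlap, hB.eigenvectorBasis.sum_sq_norm_inner_left,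
    hA.eigenvectorBasis.orthonormal.1 i]

theorem eigenOverlap_self (hA : A.IsHermitian) (i j : n) :
    eigenOverlap hA hA i j = if i = j then 1 else 0 := by
  rw [eigenOverlap, orthonormal_iff_ite.mp hA.eigenvectorBasis.orthonormal i j]
  split_ifs <;> simp

theorem star_eigenvectorUnitary_mul_eigenvectorUnitary_apply (hA : A.IsHermitian)
    (hB : B.IsHermitian) (i j : n) :
    (star (hA.eigenvectorUnitary : Matrix n n ℂ) * hB.eigenvectorUnitary) i j =
      ⟪hA.eigenvectorBasis i, hB.eigenvectorBasis j⟫_ℂ := by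
  simp [mul_apply, EuclideanSpace.inner_eq_star_dotProduct, dotProduct, mul_comm]

theorem trace_cfc_mul_cfc (hA : A.IsHermitian) (hB : B.IsHermitian) (f g : ℝ → ℝ) :
    (hA.cfc f * hB.cfc g).trace =
      ((∑ i, ∑ j, f (hA.eigenvalues i) * g (hB.eigenvalues j) * eigenOverlap hA hB i j : ℝ) :
        ℂ) := by
  set W := star (hA.eigenvectorUnitary : Matrix n n ℂ) * hB.eigenvectorUnitary
  have hcycle : (hA.cfc f * hB.cfc g).trace =
      (diagonal (RCLike.ofReal ∘ f ∘ hA.eigenvalues) * W *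
        diagonal (RCLike.ofReal ∘ g ∘ hB.eigenvalues) * star W).trace := by
    simp only [IsHermitian.cfc, Unitary.conjStarAlgAut_apply, W, star_mul, star_star, mul_assoc]
    rw [trace_mul_comm]
    simp only [mul_assoc]
  rw [hcycle, trace_diagonal_mul_mul_diagonal_mul_star]
  push_cast
  refine Fintype.sum_congr _ _ fun i => Fintype.sum_congr _ _ fun j => ?_
  simp only [W, star_eigenvectorUnitary_mul_eigenvectorUnitary_apply, RCLike.star_def,
    RCLike.mul_conj, eigenOverlap, Function.comp_apply]
  push_cast
  rfl

theorem trace_mul_cfc (hA : A.IsHermitian) (hB : B.IsHermitian) (g : ℝ → ℝ) :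
    (A * hB.cfc g).trace =
      ((∑ i, ∑ j, hA.eigenvalues i * g (hB.eigenvalues j) * eigenOverlap hA hB i j : ℝ) : ℂ) := by
  simpa only [hA.cfc_id, id_eq] using hA.trace_cfc_mul_cfc hB id g

theorem eigenvalues_mul_eigenOverlap_eq_zero (hA : A.IsHermitian) (hB : B.IsHermitian)
    (hker : ∀ v, B *ᵥ v = 0 → A *ᵥ v = 0) (i : n) {j : n} (hj : hB.eigenvalues j = 0) :
    hA.eigenvalues i * eigenOverlap hA hB i j = 0 := by
  have hAv : A *ᵥ ⇑(hB.eigenvectorBasis j) = 0 :=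
    hker _ (by rw [hB.mulVec_eigenvectorBasis, hj, zero_smul])
  have hinner : (hA.eigenvalues i : ℂ) * ⟪hA.eigenvectorBasis i, hB.eigenvectorBasis j⟫_ℂ = 0 := by
    calc _ = ⟪toEuclideanLin A (hA.eigenvectorBasis i), hB.eigenvectorBasis j⟫_ℂ := by
          simp [toLpLin_apply, hA.mulVec_eigenvectorBasis]
      _ = ⟪hA.eigenvectorBasis i, toEuclideanLin A (hB.eigenvectorBasis j)⟫_ℂ :=
          isSymmetric_toEuclideanLin_iff.mpr hA _ _
      _ = 0 := by simp [toLpLin_apply, hAv]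
  rcases mul_eq_zero.mp hinner with h | h
  · simp [Complex.ofReal_eq_zero.mp h]
  · simp [eigenOverlap, h]

end Matrix.IsHermitian

section

variable {n : Type*} [Fintype n] [DecidableEq n] {A B : Matrix n n ℂ}

theorem msqrt_eq_cfc (hA : A.PosSemidef) : msqrt A = hA.1.cfc Real.sqrt := by
  rw [msqrt, dif_pos hA]
  rfl

-- `Real.log 0 = 0` already, so taking the logarithm on the support changes nothing.
theorem mlog0_eq_cfc (hA : A.IsHermitian) : mlog0 A = hA.cfc Real.log := by
  rw [mlog0, dif_pos hA]
  congr 1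
  funext x
  split_ifs with hx <;> simp [hx]

theorem relEnt0_eq_sum_eigenOverlap (hA : A.IsHermitian) (hB : B.IsHermitian) :
    relEnt0 A B = ∑ i, hA.eigenvalues i * Real.log (hA.eigenvalues i) -
      ∑ i, ∑ j, hA.eigenvalues i * Real.log (hB.eigenvalues j) * hA.eigenOverlap hB i j := by
  rw [relEnt0, mlog0_eq_cfc hA, mlog0_eq_cfc hB, mul_sub, trace_sub, hA.trace_mul_cfc hA,
    hA.trace_mul_cfc hB, ← Complex.ofReal_sub, Complex.ofReal_re]
  simp [hA.eigenOverlap_self]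

end

theorem relEnt_ge_neg_two_log_fidelity_general {n : Type*} [Fintype n] [DecidableEq n]
    (rho sigma : Matrix n n ℂ) (hrho : rho.PosSemidef) (hrho1 : rho.trace = 1)
    (hsigma : sigma.PosSemidef)
    (hsupp : ∀ v : n → ℂ, sigma *ᵥ v = 0 → rho *ᵥ v = 0) :
    relEnt0 rho sigma ≥ -2 * Real.log (Matrix.trace (msqrt rho * msqrt sigma)).re := by
  have hp1 : ∑ i, hrho.1.eigenvalues i = 1 := by
    have htrace := hrho.1.trace_eq_sum_eigenvalues
    rw [hrho1, ← RCLike.ofReal_sum] at htrace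
    exact Complex.ofReal_eq_one.mp htrace.symm
  rw [ge_iff_le, relEnt0_eq_sum_eigenOverlap hrho.1 hsigma.1, msqrt_eq_cfc hrho,
    msqrt_eq_cfc hsigma, hrho.1.trace_cfc_mul_cfc, Complex.ofReal_re]
  exact Real.neg_two_log_sum_sqrt_mul_sqrt_le hrho.eigenvalues_nonneg hsigma.eigenvalues_nonneg
    (fun _ _ => sq_nonneg _) hp1 (hrho.1.sum_eigenOverlap hsigma.1)
    fun i _ hj => hrho.1.eigenvalues_mul_eigenOverlap_eq_zero hsigma.1 hsupp i hj

theorem relEnt_ge_neg_two_log_fidelity {n : Type*} [Fintype n] [DecidableEq n]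
    (rho sigma : Matrix n n ℂ) (hrho : rho.PosSemidef) (hrho1 : rho.trace = 1)
    (hsigma : sigma.PosSemidef) (hsigma1 : sigma.trace.re ≤ 1)
    (hsupp : ∀ v : n → ℂ, sigma *ᵥ v = 0 → rho *ᵥ v = 0) :
    relEnt0 rho sigma ≥ -2 * Real.log (Matrix.trace (msqrt rho * msqrt sigma)).re :=
  relEnt_ge_neg_two_log_fidelity_general rho sigma hrho hrho1 hsigma hsupp
end

section
/- For a state ρ and a substate σ on a finite-dimensional Hilbert space, ‖√ρ − √σ‖₂² ≥ (1/4)‖ρ − σ‖₁². -/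
open Matrix
open ComplexOrder
open scoped Classical

/-!
With `A = √ρ - √σ` and `B = √ρ + √σ` we have `2 (ρ - σ) = A B + B A`. Pairing `ρ - σ` with its
sign unitary `U`, for which `Tr (U (ρ - σ)) = ‖ρ - σ‖₁`, and applying Cauchy–Schwarz to
`Tr (U A B)` and `Tr (U B A)` gives `‖ρ - σ‖₁ ≤ ‖A‖₂ ‖B‖₂`. The parallelogram law gives
`‖A‖₂² + ‖B‖₂² = 2 (Tr ρ + Tr σ) ≤ 4`, so `‖B‖₂ ≤ 2` and `‖ρ - σ‖₁ ≤ 2 ‖A‖₂`.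
-/

section

variable {n : Type*} [Fintype n] [DecidableEq n]

lemma frob_nonneg (X : Matrix n n ℂ) : 0 ≤ frob X := Real.sqrt_nonneg _

lemma frob_sq (X : Matrix n n ℂ) : frob X ^ 2 = (trace (Xᴴ * X)).re :=
  Real.sq_sqrt (Complex.nonneg_iff.mp (posSemidef_conjTranspose_mul_self X).trace_nonneg).1

/-- `frob` is the norm of the inner product `⟪X, Y⟫ = Tr (Y * 1 * Xᴴ)` that Mathlib attaches to
the weight matrix `1`. -/
lemma re_trace_conjTranspose_mul_le (A M : Matrix n n ℂ) :
    (trace (Aᴴ * M)).re ≤ frob A * frob M := by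
  let := Matrix.toMatrixSeminormedAddCommGroup (1 : Matrix n n ℂ) PosSemidef.one
  let := Matrix.toMatrixInnerProductSpace (1 : Matrix n n ℂ) PosSemidef.one
  have hinner (X Y : Matrix n n ℂ) : inner ℂ X Y = trace (Xᴴ * Y) := by
    change trace (Y * 1 * Xᴴ) = _
    rw [Matrix.mul_one, trace_mul_comm]
  have hnorm (X : Matrix n n ℂ) : ‖X‖ = frob X := by
    rw [norm_eq_sqrt_re_inner (𝕜 := ℂ), hinner]; rfl
  simpa only [hinner, hnorm, RCLike.re_to_complex] using re_inner_le_norm (𝕜 := ℂ) A M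

lemma frob_sub_sq_add_frob_add_sq (X Y : Matrix n n ℂ) :
    frob (X - Y) ^ 2 + frob (X + Y) ^ 2 = 2 * frob X ^ 2 + 2 * frob Y ^ 2 := by
  have key : (X - Y)ᴴ * (X - Y) + (X + Y)ᴴ * (X + Y) =
      (2 : ℂ) • (Xᴴ * X) + (2 : ℂ) • (Yᴴ * Y) := by
    simp only [conjTranspose_sub, conjTranspose_add, two_smul]
    noncomm_ring
  simp only [frob_sq, ← Complex.add_re, ← trace_add, key]
  simp

lemma frob_mul_unitary (B : Matrix n n ℂ) {U : Matrix n n ℂ} (hU : U ∈ unitary (Matrix n n ℂ)) :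
    frob (B * U) = frob B := by
  have hUU : U * Uᴴ = 1 := Unitary.mul_star_self_of_mem hU
  rw [frob, frob, conjTranspose_mul, Matrix.mul_assoc, trace_mul_comm, Matrix.mul_assoc,
    Matrix.mul_assoc B, hUU, Matrix.mul_one]

lemma frob_unitary_mul {U : Matrix n n ℂ} (hU : U ∈ unitary (Matrix n n ℂ)) (B : Matrix n n ℂ) :
    frob (U * B) = frob B := by
  have hUU : Uᴴ * U = 1 := Unitary.star_mul_self_of_mem hU
  rw [frob, frob, conjTranspose_mul, Matrix.mul_assoc, ← Matrix.mul_assoc Uᴴ, hUU, Matrix.one_mul]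

open scoped MatrixOrder

lemma msqrt_eq_sqrt {A : Matrix n n ℂ} (hA : A.PosSemidef) : msqrt A = CFC.sqrt A := by
  rw [CFC.sqrt_eq_real_sqrt A hA.nonneg, cfcₙ_eq_cfc, Matrix.IsHermitian.cfc_eq hA.1 Real.sqrt,
    msqrt, dif_pos hA, Matrix.IsHermitian.cfc, Unitary.conjStarAlgAut_apply]
  rfl

lemma isSelfAdjoint_msqrt {A : Matrix n n ℂ} (hA : A.PosSemidef) : IsSelfAdjoint (msqrt A) := by
  rw [msqrt_eq_sqrt hA]
  exact (CFC.sqrt_nonneg A).isSelfAdjoint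

lemma msqrt_mul_self {A : Matrix n n ℂ} (hA : A.PosSemidef) : msqrt A * msqrt A = A := by
  rw [msqrt_eq_sqrt hA]
  exact CFC.sqrt_mul_sqrt_self A hA.nonneg

lemma frob_msqrt_sq {A : Matrix n n ℂ} (hA : A.PosSemidef) :
    frob (msqrt A) ^ 2 = (trace A).re := by
  rw [frob_sq, ← star_eq_conjTranspose, (isSelfAdjoint_msqrt hA).star_eq, msqrt_mul_self hA]

lemma trNorm_eq_re_trace_abs (X : Matrix n n ℂ) : trNorm X = (trace (CFC.abs X)).re := by
  rw [trNorm, msqrt_eq_sqrt (posSemidef_conjTranspose_mul_self X)]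
  rfl

lemma trNorm_nonneg (X : Matrix n n ℂ) : 0 ≤ trNorm X := by
  rw [trNorm_eq_re_trace_abs]
  exact (Complex.nonneg_iff.mp (CFC.abs_nonneg X).posSemidef.trace_nonneg).1

lemma exists_unitary_mul_eq_abs {D : Matrix n n ℂ} (hD : IsSelfAdjoint D) :
    ∃ U ∈ unitary (Matrix n n ℂ), U * D = CFC.abs D := by
  -- the spectrum is finite, so the discontinuous sign function is admissible in `cfc`
  have hcont (f : ℝ → ℝ) : ContinuousOn f (spectrum ℝ D) :=
    (finite_real_spectrum (A := D)).continuousOn f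
  set s : ℝ → ℝ := fun x => if 0 ≤ x then 1 else -1
  have hsq : cfc s D * cfc s D = 1 := by
    rw [← cfc_mul s s D (hcont s) (hcont s), ← cfc_one ℝ D]
    refine cfc_congr fun x _ => ?_
    by_cases hx : 0 ≤ x <;> simp [s, hx]
  refine ⟨cfc s D, ?_, ?_⟩
  · rw [Unitary.mem_iff, (cfc_predicate s D).star_eq]
    exact ⟨hsq, hsq⟩
  · nth_rewrite 2 [← cfc_id' ℝ D]
    rw [← cfc_mul s (fun x => x) D (hcont s) (hcont _), CFC.abs_eq_cfc_norm D]
    refine cfc_congr fun x _ => ?_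
    by_cases hx : 0 ≤ x <;> simp [s, hx, abs_of_nonneg, abs_of_neg, not_le.mp]

lemma trNorm_mul_self_sub_mul_self_le {X Y : Matrix n n ℂ} (hX : IsSelfAdjoint X)
    (hY : IsSelfAdjoint Y) : trNorm (X * X - Y * Y) ≤ frob (X - Y) * frob (X + Y) := by
  have h2D : X * X - Y * Y + (X * X - Y * Y) = (X - Y) * (X + Y) + (X + Y) * (X - Y) := by
    noncomm_ring
  have hD : IsSelfAdjoint (X * X - Y * Y) := by
    simpa only [hX.star_eq, hY.star_eq] using
      (IsSelfAdjoint.star_mul_self X).sub (IsSelfAdjoint.star_mul_self Y)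
  set A := X - Y
  set B := X + Y
  have hA : Aᴴ = A := (hX.sub hY).star_eq
  obtain ⟨U, hU, hUD⟩ := exists_unitary_mul_eq_abs hD
  have hAB : trace (U * (A * B)) = trace (Aᴴ * (B * U)) := by
    rw [hA, trace_mul_comm, Matrix.mul_assoc]
  have hBA : trace (U * (B * A)) = trace (Aᴴ * (U * B)) := by
    rw [hA, ← Matrix.mul_assoc, trace_mul_comm]
  have hsplit : 2 * trNorm (X * X - Y * Y) =
      (trace (Aᴴ * (B * U))).re + (trace (Aᴴ * (U * B))).re := by
    rw [trNorm_eq_re_trace_abs, ← hUD, two_mul, ← Complex.add_re, ← trace_add, ← Matrix.mul_add,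
      h2D, Matrix.mul_add, trace_add, Complex.add_re, hAB, hBA]
  have hCS := re_trace_conjTranspose_mul_le A (B * U)
  have hCS' := re_trace_conjTranspose_mul_le A (U * B)
  rw [frob_mul_unitary B hU] at hCS
  rw [frob_unitary_mul hU B] at hCS'
  linarith

end

theorem frob_sq_ge_quarter_trace_norm_sq {n : Type*} [Fintype n] [DecidableEq n]
    (rho sigma : Matrix n n ℂ) (hrho : rho.PosSemidef) (hrho1 : rho.trace = 1)
    (hsigma : sigma.PosSemidef) (hsigma1 : sigma.trace.re ≤ 1) :
    frob (msqrt rho - msqrt sigma) ^ 2 ≥ (1 / 4) * trNorm (rho - sigma) ^ 2 := by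
  have hprod : trNorm (rho - sigma) ≤
      frob (msqrt rho - msqrt sigma) * frob (msqrt rho + msqrt sigma) := by
    simpa only [msqrt_mul_self hrho, msqrt_mul_self hsigma] using
      trNorm_mul_self_sub_mul_self_le (isSelfAdjoint_msqrt hrho) (isSelfAdjoint_msqrt hsigma)
  have hsum : frob (msqrt rho - msqrt sigma) ^ 2 + frob (msqrt rho + msqrt sigma) ^ 2 ≤ 4 := by
    rw [frob_sub_sq_add_frob_add_sq, frob_msqrt_sq hrho, frob_msqrt_sq hsigma, hrho1,
      Complex.one_re]
    linarith
  have hplus : frob (msqrt rho + msqrt sigma) ≤ 2 := by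
    nlinarith [frob_nonneg (msqrt rho + msqrt sigma)]
  have hminus := frob_nonneg (msqrt rho - msqrt sigma)
  have htwice : trNorm (rho - sigma) ≤ 2 * frob (msqrt rho - msqrt sigma) := by
    nlinarith
  nlinarith [trNorm_nonneg (rho - sigma)]
end
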